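/- The exponential generating function of the central factorials satisfies Σ_{n=0}^∞ x^{[n]}·t^n/n! = (t/2 + √(1+t²/4))^{2x}, as an identity of convergent power series for |t| small. -/

import Mathlib

noncomputable def centralFact (x : ℝ) : ℕ → ℝ
  | 0 => 1
  | n + 1 => x * ∏ i ∈ Finset.range n, (x + ((n : ℝ) + 1) / 2 - 1 - i)

/-!
The function `g t = exp (2 x arsinh (t / 2))` satisfies `(1 + t² / 4) g'' + (t / 4) g' = x² g`.
Differentiating this `n` times at `0`, only the lowest derivatives of the polynomial coefficients
survive, and one gets `g⁽ⁿ⁺²⁾(0) = (x² - n² / 4) g⁽ⁿ⁾(0)`: the recurrence of the central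
factorials, with the same initial values `g(0) = 1`, `g'(0) = x`. As `g` is real analytic, its
Taylor series at `0` converges to `g` near `0`.
-/

open Real
open scoped ContDiff

section IteratedDeriv

variable {𝕜 : Type*} [NontriviallyNormedField 𝕜]
  {F : Type*} [NormedAddCommGroup F] [NormedSpace 𝕜 F]

theorem iteratedDeriv_iteratedDeriv (f : 𝕜 → F) (n k : ℕ) :
    iteratedDeriv n (iteratedDeriv k f) = iteratedDeriv (n + k) f := by
  simp only [iteratedDeriv_eq_iterate, Function.iterate_add_apply]

theorem ContDiff.contDiffAt_iteratedDeriv {f : 𝕜 → F} (hf : ContDiff 𝕜 ∞ f) (n k : ℕ) (x : 𝕜) :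
    ContDiffAt 𝕜 n (iteratedDeriv k f) x := by
  rw [iteratedDeriv_eq_iterate]
  exact ((hf.iterate_deriv k).of_le (mod_cast le_top)).contDiffAt

theorem iteratedDeriv_pow_mul_iteratedDeriv_apply_zero {f : 𝕜 → 𝕜} (hf : ContDiff 𝕜 ∞ f)
    (n m : ℕ) :
    iteratedDeriv n (fun t => t ^ m * iteratedDeriv m f t) 0
      = n.descFactorial m * iteratedDeriv n f 0 := by
  rw [iteratedDeriv_fun_mul (by fun_prop) (hf.contDiffAt_iteratedDeriv n m 0)]
  simp_rw [iteratedDeriv_fun_pow_zero, iteratedDeriv_iteratedDeriv]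
  rcases le_or_gt m n with hmn | hnm
  · rw [Finset.sum_eq_single m (by intro i _ hi; simp [hi]) (by simp; omega),
      Nat.sub_add_cancel hmn]
    simp [Nat.descFactorial_eq_factorial_mul_choose, mul_comm]
  · rw [Nat.descFactorial_eq_zero_iff_lt.mpr hnm, Finset.sum_eq_zero]
    · simp
    · intro i hi
      simp only [Finset.mem_range] at hi
      simp [show i ≠ m by omega]

theorem iteratedDeriv_add_two_apply_zero_of_ode {f : 𝕜 → 𝕜} (hf : ContDiff 𝕜 ∞ f) {a b c : 𝕜}
    (hode : ∀ t, (1 + a * t ^ 2) * iteratedDeriv 2 f t + b * t * deriv f t = c * f t) (n : ℕ) :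
    iteratedDeriv (n + 2) f 0 = (c - a * n * (n - 1) - b * n) * iteratedDeriv n f 0 := by
  have h1 := hf.contDiffAt_iteratedDeriv n 1 0
  have h2 := hf.contDiffAt_iteratedDeriv n 2 0
  have hode' : (fun t => iteratedDeriv 2 f t + a * (t ^ 2 * iteratedDeriv 2 f t)
      + b * (t ^ 1 * iteratedDeriv 1 f t)) = fun t => c * f t := by
    funext t
    rw [← hode t, iteratedDeriv_one]
    ring
  have hderiv := congrArg (iteratedDeriv n · 0) hode'
  beta_reduce at hderiv
  rw [iteratedDeriv_fun_add (by fun_prop) (by fun_prop), iteratedDeriv_fun_add h2 (by fun_prop),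
    iteratedDeriv_const_mul_field, iteratedDeriv_const_mul_field, iteratedDeriv_const_mul_field,
    iteratedDeriv_pow_mul_iteratedDeriv_apply_zero hf,
    iteratedDeriv_pow_mul_iteratedDeriv_apply_zero hf, iteratedDeriv_iteratedDeriv,
    Nat.cast_descFactorial_two, Nat.descFactorial_one] at hderiv
  linear_combination hderiv

end IteratedDeriv

theorem centralFact_add_two (x : ℝ) (n : ℕ) :
    centralFact x (n + 2) = (x ^ 2 - ((n : ℝ) / 2) ^ 2) * centralFact x n := by
  cases n with
  | zero => simp [centralFact]; ring
  | succ n =>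
    simp only [centralFact]
    rw [Finset.prod_range_succ, Finset.prod_range_succ', Finset.prod_congr rfl fun i _ => (by push_cast; ring :
      x + (((n + 2 : ℕ) : ℝ) + 1) / 2 - 1 - ((i + 1 : ℕ) : ℝ) = x + ((n : ℝ) + 1) / 2 - 1 - i)]
    push_cast
    ring

noncomputable def centralFactEgf (x t : ℝ) : ℝ := exp (2 * x * arsinh (t / 2))

theorem contDiff_centralFactEgf (x : ℝ) : ContDiff ℝ ω (centralFactEgf x) := by
  unfold centralFactEgf
  fun_prop

theorem hasDerivAt_centralFactEgf (x t : ℝ) :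
    HasDerivAt (centralFactEgf x) (x * centralFactEgf x t / √(1 + (t / 2) ^ 2)) t := by
  unfold centralFactEgf
  convert (((hasDerivAt_id' t).div_const 2).arsinh.const_mul (2 * x)).exp using 1
  rw [smul_eq_mul]
  field_simp

theorem hasDerivAt_sqrt_one_add_half_sq (t : ℝ) :
    HasDerivAt (fun t => √(1 + (t / 2) ^ 2)) (t / (4 * √(1 + (t / 2) ^ 2))) t := by
  convert ((((hasDerivAt_id' t).div_const 2).fun_pow 2).const_add 1).sqrt (by positivity) using 1
  field_simp
  ring

theorem centralFactEgf_ode (x t : ℝ) :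
    (1 + 1 / 4 * t ^ 2) * iteratedDeriv 2 (centralFactEgf x) t
      + 1 / 4 * t * deriv (centralFactEgf x) t = x ^ 2 * centralFactEgf x t := by
  have hderiv : deriv (centralFactEgf x) = fun t => x * centralFactEgf x t / √(1 + (t / 2) ^ 2) :=
    funext fun t => (hasDerivAt_centralFactEgf x t).deriv
  have hq : 0 < √(1 + (t / 2) ^ 2) := by positivity
  have hq2 : √(1 + (t / 2) ^ 2) ^ 2 = 1 + (t / 2) ^ 2 := sq_sqrt (by positivity)
  rw [iteratedDeriv_succ, iteratedDeriv_one, hderiv,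
    (((hasDerivAt_centralFactEgf x t).const_mul x).fun_div (hasDerivAt_sqrt_one_add_half_sq t)
      hq.ne').deriv]
  beta_reduce
  generalize √(1 + (t / 2) ^ 2) = q at hq hq2 ⊢
  field_simp
  linear_combination 4 * x * centralFactEgf x t * (t - 4 * x * q) * hq2

theorem iteratedDeriv_centralFactEgf_zero (x : ℝ) (n : ℕ) :
    iteratedDeriv n (centralFactEgf x) 0 = centralFact x n := by
  induction n using Nat.twoStepInduction with
  | zero => simp [centralFactEgf, centralFact]
  | one => simp [(hasDerivAt_centralFactEgf x 0).deriv, centralFactEgf, centralFact]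
  | more n ih _ =>
    rw [iteratedDeriv_add_two_apply_zero_of_ode ((contDiff_centralFactEgf x).of_le le_top)
      (centralFactEgf_ode x) n, ih, centralFact_add_two]
    ring

theorem central_factorial_egf (x : ℝ) :
    ∃ ε > (0 : ℝ), ∀ t : ℝ, |t| < ε →
      HasSum (fun n : ℕ => centralFact x n / (n.factorial : ℝ) * t ^ n)
        (Real.exp (2 * x * Real.arsinh (t / 2))) := by
  have hanalytic : AnalyticAt ℝ (centralFactEgf x) 0 :=
    (contDiff_centralFactEgf x).contDiffAt.analyticAt
  obtain ⟨ε, hε, hsum⟩ := Metric.eventually_nhds_iff.mp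
    hanalytic.hasFPowerSeriesAt.eventually_hasSum
  refine ⟨ε, hε, fun t ht => ?_⟩
  simpa [FormalMultilinearSeries.ofScalars_apply_eq, iteratedDeriv_centralFactEgf_zero,
    centralFactEgf, mul_comm] using hsum (by simpa using ht)
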